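/- arXiv:0706.2457 — 4 statements merged into one kernel-verified Lean document; each statement's English description precedes it below -/
import Mathlib

section
/- If H is a bounded self-adjoint operator and θ is a real number with |θ| ≤ π/4, then 1 + i e^{iθ} H is invertible and ‖(1 + i e^{iθ} H)⁻¹‖ ≤ √2. -/
/-!
Write `A = 1 + (i w) • H` with `‖w‖ = 1`. Since `⟪H x, x⟫` is real and `w * conj w = 1`,
`w * ⟪A x, x⟫ = ‖x‖² w - i ⟪H x, x⟫` has real part `‖x‖² Re w`, so `|⟪A x, x⟫| ≥ Re w ‖x‖²`.
For `w = e^{iθ}` with `|θ| ≤ π/4` this is `|⟪A x, x⟫| ≥ ‖x‖² / √2`, and an operator whose numerical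
range stays at distance `c > 0` from `0` is invertible with inverse of norm at most `1 / c`.
-/

open Complex Real

open scoped NNReal InnerProductSpace ComplexConjugate

theorem ContinuousLinearMap.exists_inverse_norm_le_of_forall_le_norm_inner_map
    {𝕜 E : Type*} [RCLike 𝕜] [NormedAddCommGroup E] [InnerProductSpace 𝕜 E] [CompleteSpace E]
    (f : E →L[𝕜] E) {c : ℝ≥0} (hc : 0 < c) (h : ∀ x, ‖x‖ ^ 2 * c ≤ ‖⟪f x, x⟫_𝕜‖) :
    ∃ g : E →L[𝕜] E, f * g = 1 ∧ g * f = 1 ∧ ‖g‖ ≤ c⁻¹ := by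
  obtain ⟨u, rfl⟩ := f.isUnit_of_forall_le_norm_inner_map hc h
  refine ⟨↑u⁻¹, u.mul_inv, u.inv_mul,
    (↑u⁻¹ : E →L[𝕜] E).opNorm_le_bound (by positivity) fun x ↦ ?_⟩
  have hanti := (u : E →L[𝕜] E).antilipschitz_of_forall_le_inner_map hc h
  have hbound := (u : E →L[𝕜] E).bound_of_antilipschitz hanti ((↑u⁻¹ : E →L[𝕜] E) x)
  rwa [← mul_apply_eq_comp, u.mul_inv, one_apply_eq_self] at hbound

theorem IsSelfAdjoint.re_mul_norm_sq_le_norm_inner_one_add_I_mul_smul_apply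
    {E : Type*} [NormedAddCommGroup E] [InnerProductSpace ℂ E] [CompleteSpace E]
    {H : E →L[ℂ] E} (hH : IsSelfAdjoint H) {w : ℂ} (hw : ‖w‖ = 1) (x : E) :
    ‖x‖ ^ 2 * w.re ≤ ‖⟪(1 + (I * w) • H) x, x⟫_ℂ‖ := by
  set t : ℝ := re ⟪H x, x⟫_ℂ
  have ht : ⟪H x, x⟫_ℂ = t := (hH.isSymmetric.coe_re_inner_apply_self x).symm
  have hwc : w * conj w = 1 := by
    rw [mul_conj, normSq_eq_norm_sq, hw, one_pow, ofReal_one]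
  have hrot : w * ⟪(1 + (I * w) • H) x, x⟫_ℂ = ‖x‖ ^ 2 * w - I * t := by
    rw [add_apply, one_apply_eq_self, smul_apply, inner_add_left, inner_smul_left,
      inner_self_eq_norm_sq_to_K, ht, map_mul, conj_I]
    linear_combination (-I * t) * hwc
  calc ‖x‖ ^ 2 * w.re = (w * ⟪(1 + (I * w) • H) x, x⟫_ℂ).re := by
        rw [hrot]; simp [← ofReal_pow]
    _ ≤ ‖w * ⟪(1 + (I * w) • H) x, x⟫_ℂ‖ := re_le_norm _
    _ = ‖⟪(1 + (I * w) • H) x, x⟫_ℂ‖ := by rw [norm_mul, hw, one_mul]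

theorem Real.inv_sqrt_two_le_cos {θ : ℝ} (hθ : |θ| ≤ π / 4) : (√2)⁻¹ ≤ Real.cos θ := by
  rw [← cos_abs, inv_eq_one_div, ← div_sqrt, one_div_div, ← Real.cos_pi_div_four]
  exact cos_le_cos_of_nonneg_of_le_pi (abs_nonneg θ) (by linarith [pi_pos]) hθ

/-- If `H` is a bounded self-adjoint operator and `|θ| ≤ π/4`, then `1 + i e^{iθ} H`
is invertible and `‖(1 + i e^{iθ} H)⁻¹‖ ≤ √2`. -/
theorem inverse_one_add_I_exp_smul_selfAdjoint_norm_le_sqrt_two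
    {E : Type*} [NormedAddCommGroup E] [InnerProductSpace ℂ E] [CompleteSpace E]
    (H : E →L[ℂ] E) (hH : IsSelfAdjoint H) (θ : ℝ) (hθ : |θ| ≤ π / 4) :
    ∃ B : E →L[ℂ] E,
      (1 + (Complex.I * Complex.exp (θ * Complex.I)) • H) * B = 1 ∧
      B * (1 + (Complex.I * Complex.exp (θ * Complex.I)) • H) = 1 ∧
      ‖B‖ ≤ Real.sqrt 2 := by
  have hnumerical_range (x : E) :
      ‖x‖ ^ 2 * (NNReal.sqrt 2)⁻¹ ≤ ‖⟪(1 + (I * exp (θ * I)) • H) x, x⟫_ℂ‖ :=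
    calc ‖x‖ ^ 2 * ((NNReal.sqrt 2)⁻¹ : ℝ≥0) ≤ ‖x‖ ^ 2 * (exp (θ * I)).re := by
          gcongr
          simpa [exp_ofReal_mul_I_re] using inv_sqrt_two_le_cos hθ
      _ ≤ _ := hH.re_mul_norm_sq_le_norm_inner_one_add_I_mul_smul_apply
          (norm_exp_ofReal_mul_I θ) x
  obtain ⟨B, hAB, hBA, hB⟩ :=
    ContinuousLinearMap.exists_inverse_norm_le_of_forall_le_norm_inner_map _ (by positivity)
      hnumerical_range
  exact ⟨B, hAB, hBA, by simpa using hB⟩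
end

section
/- (Cayley's formula with degrees) The number of labelled trees on n vertices {1,...,n} in which vertex v has degree k_v (where each k_v ≥ 1 and ∑_v k_v = 2(n-1)) equals (n-2)! / ∏_v (k_v - 1)!. -/
/-!
Since `∑ k_v = 2(n - 1) < 2n`, some vertex `v` has `k_v = 1` and is a leaf of every tree counted.
Deleting it and remembering its neighbour `u` is a bijection onto the pairs `(u, T')` where `T'` is
a tree on the remaining `n - 1` vertices with degrees `k`, except `k_u - 1` at `u`. By induction `u`
contributes `(k_u - 1) (n - 3)! / ∏_{w ≠ v} (k_w - 1)!`, and `∑_{u ≠ v} (k_u - 1) = n - 2`.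
The count is carried in the multiplied-out form `N * ∏ (k_v - 1)! = (n - 2)!`, which avoids
truncated division.
-/

open scoped Classical Nat
open Finset Function

theorem Fintype.exists_eq_one_of_sum_lt {ι : Type*} [Fintype ι] {k : ι → ℕ}
    (hk1 : ∀ i, 1 ≤ k i) (hk : ∑ i, k i < 2 * Fintype.card ι) : ∃ i, k i = 1 := by
  by_contra! h
  have : ∑ _i : ι, 2 ≤ ∑ i, k i := sum_le_sum fun i _ => by have := hk1 i; have := h i; omega
  simp only [sum_const, card_univ, smul_eq_mul] at this
  omega

theorem Fintype.prod_factorial_pred_eq_mul_prod_update {ι : Type*} [Fintype ι]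
    [DecidableEq ι] (f : ι → ℕ) {u : ι} (hu : 2 ≤ f u) :
    ∏ i, (f i - 1)! = (f u - 1) * ∏ i, (update f u (f u - 1) i - 1)! := by
  rw [Fintype.prod_eq_mul_prod_compl u, Fintype.prod_eq_mul_prod_compl u (fun i => _ !),
    update_self, ← mul_assoc, Nat.mul_factorial_pred (by omega)]
  congr 1
  exact Finset.prod_congr rfl fun i hi => by rw [update_of_ne (by simpa using hi)]

theorem Fintype.sum_update_pred_add_one {ι : Type*} [Fintype ι] [DecidableEq ι]
    (f : ι → ℕ) {u : ι} (hu : 1 ≤ f u) :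
    ∑ i, update f u (f u - 1) i + 1 = ∑ i, f i := by
  have : ∑ i ∈ {u}ᶜ, update f u (f u - 1) i = ∑ i ∈ {u}ᶜ, f i :=
    Finset.sum_congr rfl fun i hi => update_of_ne (by simpa using hi) _ _
  rw [Fintype.sum_eq_add_sum_compl u, Fintype.sum_eq_add_sum_compl u f, update_self, this]
  omega

namespace SimpleGraph

variable {V : Type*} {G : SimpleGraph V} {v u : V}

theorem Walk.IsCycle.notMem_support_of_adj_iff (h : ∀ w, G.Adj v w ↔ w = u) {x : V}
    {c : G.Walk x x} (hc : c.IsCycle) : v ∉ c.support := by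
  intro hv
  have hc' := (Walk.isCycle_rotate hv).mpr hc
  exact hc'.snd_ne_penultimate <|
    ((h _).mp ((c.rotate v hv).adj_snd hc'.not_nil)).trans
      ((h _).mp ((c.rotate v hv).adj_penultimate hc'.not_nil).symm).symm

theorem isAcyclic_of_induce_compl_singleton (hG : (G.induce {v}ᶜ).IsAcyclic)
    (h : ∀ w, G.Adj v w ↔ w = u) : G.IsAcyclic := by
  intro x c hc
  have hs : ∀ y ∈ c.support, y ∈ ({v}ᶜ : Set V) := fun y hy hyv =>
    hc.notMem_support_of_adj_iff h (hyv ▸ hy)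
  refine hG (c.induce _ hs) ?_
  rwa [← Walk.isCycle_map_iff_of_injective (f := (Embedding.induce (G := G) _).toHom)
    Subtype.val_injective, Walk.map_induce]

theorem connected_of_induce_compl_singleton (hG : (G.induce {v}ᶜ).Connected)
    (h : ∀ w, G.Adj v w ↔ w = u) : G.Connected := by
  have hu : u ≠ v := ((h u).mpr rfl).ne'
  have hreach : ∀ w, G.Reachable w u := by
    intro w
    rcases eq_or_ne w v with rfl | hw
    · exact ((h u).mpr rfl).reachable
    · exact (hG.preconnected ⟨w, hw⟩ ⟨u, hu⟩).map (Embedding.induce _).toHom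
  exact (connected_iff G).mpr ⟨fun a b => (hreach a).trans (hreach b).symm, ⟨v⟩⟩

theorem IsTree.of_induce_compl_singleton (hG : (G.induce {v}ᶜ).IsTree)
    (h : ∀ w, G.Adj v w ↔ w = u) : G.IsTree :=
  ⟨connected_of_induce_compl_singleton hG.connected h,
    isAcyclic_of_induce_compl_singleton hG.isAcyclic h⟩

theorem IsTree.induce_compl_singleton [Fintype (G.neighborSet v)] (hG : G.IsTree)
    (h : G.degree v = 1) : (G.induce {v}ᶜ).IsTree :=
  ⟨hG.connected.induce_compl_singleton_of_degree_eq_one h, hG.isAcyclic.induce _⟩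

def attachLeaf (H : SimpleGraph ({v}ᶜ : Set V)) (u : V) : SimpleGraph V :=
  H.map Subtype.val ⊔ edge v u

variable {H : SimpleGraph ({v}ᶜ : Set V)}

theorem attachLeaf_adj_leaf (hu : u ≠ v) (w : V) : (attachLeaf H u).Adj v w ↔ w = u := by
  simp only [attachLeaf, sup_adj, edge_adj, map_adj']
  grind

theorem attachLeaf_adj_of_ne {a b : V} (ha : a ≠ v) (hb : b ≠ v) :
    (attachLeaf H u).Adj a b ↔ H.Adj ⟨a, ha⟩ ⟨b, hb⟩ := by
  simpa [attachLeaf, edge_adj, map_adj', ha, hb] using fun h hab => h.ne (Subtype.ext hab)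

@[simp]
theorem induce_attachLeaf : (attachLeaf H u).induce {v}ᶜ = H := by
  ext ⟨a, ha⟩ ⟨b, hb⟩
  exact attachLeaf_adj_of_ne ha hb

theorem attachLeaf_induce (h : ∀ w, G.Adj v w ↔ w = u) :
    attachLeaf (G.induce {v}ᶜ) u = G := by
  have hu : u ≠ v := ((h u).mpr rfl).ne'
  ext a b
  rcases eq_or_ne a v with rfl | ha
  · rw [attachLeaf_adj_leaf hu, h]
  rcases eq_or_ne b v with rfl | hb
  · rw [adj_comm, attachLeaf_adj_leaf hu, adj_comm, h]
  exact attachLeaf_adj_of_ne ha hb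

theorem exists_adj_iff_eq_of_degree_eq_one [Fintype (G.neighborSet v)] (h : G.degree v = 1) :
    ∃ u : ({v}ᶜ : Set V), ∀ w, G.Adj v w ↔ w = u := by
  obtain ⟨u, hu, huniq⟩ := degree_eq_one_iff_existsUnique_adj.mp h
  exact ⟨⟨u, hu.ne'⟩, fun w => ⟨huniq w, fun e => e ▸ hu⟩⟩

variable [Fintype V]

-- Stated for any `H` equal to the induced graph, so that `H.degree` may use another
-- decidability instance than the one `induce` carries.
theorem degree_eq_degree_add_ite_of_induce_eq (hH : G.induce {v}ᶜ = H) (w : ({v}ᶜ : Set V)) :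
    G.degree w = H.degree w + if G.Adj w v then 1 else 0 := by
  have hGw := degree_eq_sum_if_adj (R := ℕ) G w
  have hHw := degree_eq_sum_if_adj (R := ℕ) H w
  rw [Nat.cast_id] at hGw hHw
  rw [hGw, hHw, ← hH, Fintype.sum_eq_add_sum_subtype_ne _ v, add_comm]
  rfl

noncomputable def deleteLeafDegrees (k : V → ℕ) (u : ({v}ᶜ : Set V)) :
    ({v}ᶜ : Set V) → ℕ :=
  update (fun w => k w) u (k u - 1)

theorem forall_degree_eq_iff_of_induce_eq {u : ({v}ᶜ : Set V)} (h : ∀ w, G.Adj v w ↔ w = u)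
    (hH : G.induce {v}ᶜ = H) {k : V → ℕ} (hv : k v = 1) (hu : 1 ≤ k u) :
    (∀ w, G.degree w = k w) ↔ ∀ w, H.degree w = deleteLeafDegrees k u w := by
  have hdeg : ∀ w : ({v}ᶜ : Set V), G.degree w = H.degree w + if w = u then 1 else 0 := by
    intro w
    rw [degree_eq_degree_add_ite_of_induce_eq hH, adj_comm, h]
    simp only [Subtype.ext_iff]
  have hdelete : ∀ w, H.degree w = deleteLeafDegrees k u w ↔ G.degree w = k w := by
    intro w
    rw [hdeg w, deleteLeafDegrees]
    rcases eq_or_ne w u with rfl | hwu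
    · rw [update_self, if_pos rfl]
      omega
    · rw [update_of_ne hwu, if_neg hwu, add_zero]
  refine ⟨fun hG w => (hdelete w).mpr (hG w), fun hHk w => ?_⟩
  rcases eq_or_ne w v with rfl | hw
  · rw [hv, degree_eq_one_iff_existsUnique_adj]
    exact ⟨u, (h u).mpr rfl, fun w hw => (h w).mp hw⟩
  · exact (hdelete ⟨w, hw⟩).mp (hHk _)

def treesWithDegrees (k : V → ℕ) : Set (SimpleGraph V) :=
  {G | G.IsTree ∧ ∀ v, G.degree v = k v}

variable {k : V → ℕ}

def attachLeafTree (hk : ∀ w, 1 ≤ k w) (hv : k v = 1)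
    (H : Σ u : ({v}ᶜ : Set V), treesWithDegrees (deleteLeafDegrees k u)) :
    treesWithDegrees k :=
  have hu := attachLeaf_adj_leaf (H := H.2.1) H.1.2
  ⟨attachLeaf H.2.1 H.1, IsTree.of_induce_compl_singleton (by simpa using H.2.2.1) hu,
    (forall_degree_eq_iff_of_induce_eq hu induce_attachLeaf hv (hk _)).mpr H.2.2.2⟩

theorem attachLeafTree_bijective (hk : ∀ w, 1 ≤ k w) (hv : k v = 1) :
    Bijective (attachLeafTree hk hv) := by
  constructor
  · rintro ⟨u, H⟩ ⟨u', H'⟩ h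
    have hG : attachLeaf H.1 u = attachLeaf H'.1 u' := congrArg Subtype.val h
    obtain rfl : u = u' := Subtype.ext <|
      (attachLeaf_adj_leaf u'.2 u).mp (hG ▸ (attachLeaf_adj_leaf u.2 u).mpr rfl)
    exact Sigma.subtype_ext rfl <| by simpa using congrArg (induce {v}ᶜ) hG
  · intro G
    have hG : G.1.degree v = 1 := (G.2.2 v).trans hv
    obtain ⟨u, hu⟩ := exists_adj_iff_eq_of_degree_eq_one hG
    refine ⟨⟨u, G.1.induce {v}ᶜ, G.2.1.induce_compl_singleton hG,
      (forall_degree_eq_iff_of_induce_eq hu rfl hv (hk u)).mp G.2.2⟩, Subtype.ext ?_⟩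
    exact attachLeaf_induce hu

theorem card_treesWithDegrees_eq_sum (hk : ∀ w, 1 ≤ k w) (hv : k v = 1) :
    Nat.card (treesWithDegrees k) =
      ∑ u : ({v}ᶜ : Set V), Nat.card (treesWithDegrees (deleteLeafDegrees k u)) := by
  rw [← Nat.card_eq_of_bijective _ (attachLeafTree_bijective hk hv), Nat.card_sigma]

theorem treesWithDegrees_one_eq_singleton_top (hV : Fintype.card V = 2) :
    treesWithDegrees (fun _ : V => 1) = {⊤} := by
  have : Nonempty V := Fintype.card_pos_iff.mp (by omega)
  have hdeg : ∀ (G : SimpleGraph V) v, G.degree v = 1 ↔ G.IsUniversal v := fun G v => by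
    rw [← degree_eq_card_sub_one, hV]
  ext G
  simp only [treesWithDegrees, Set.mem_ofPred_eq, Set.mem_singleton_iff]
  constructor
  · rintro ⟨-, h⟩
    ext a b
    exact ⟨fun h => h.ne, fun hab => (hdeg G a).mp (h a) hab⟩
  · rintro rfl
    exact ⟨⟨connected_top, IsAcyclic.of_card_le_two (by simp [hV])⟩,
      fun v => (hdeg ⊤ v).mpr fun _ h => h⟩

theorem card_treesWithDegrees_eq_zero (hV : 2 ≤ Fintype.card V) {w : V} (hw : k w = 0) :
    Nat.card (treesWithDegrees k) = 0 := by
  have : Nontrivial V := Fintype.one_lt_card_iff_nontrivial.mp hV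
  have : IsEmpty (treesWithDegrees k) := ⟨fun ⟨G, hG, hdeg⟩ =>
    (hG.connected.preconnected.degree_pos_of_nontrivial w).ne' (hdeg w ▸ hw)⟩
  exact Nat.card_of_isEmpty

theorem card_treesWithDegrees_mul_prod_factorial_of_leaf {n : ℕ} (hn2 : 2 ≤ n)
    (hcard : Fintype.card ({v}ᶜ : Set V) = n) (hk1 : ∀ w, 1 ≤ k w) (hk : ∑ w, k w = 2 * n)
    (hv : k v = 1)
    (ih : ∀ k' : ({v}ᶜ : Set V) → ℕ, (∀ w, 1 ≤ k' w) → ∑ w, k' w = 2 * (n - 1) →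
      Nat.card (treesWithDegrees k') * ∏ w, (k' w - 1)! = (n - 2)!) :
    Nat.card (treesWithDegrees k) * ∏ w, (k w - 1)! = (n - 1)! := by
  have hsum : ∑ w : ({v}ᶜ : Set V), k w = 2 * n - 1 := by
    have h : ∑ w, k w = k v + ∑ w : ({v}ᶜ : Set V), k w :=
      Fintype.sum_eq_add_sum_subtype_ne k v
    omega
  have hterm : ∀ u : ({v}ᶜ : Set V),
      Nat.card (treesWithDegrees (deleteLeafDegrees k u)) *
        ∏ w : ({v}ᶜ : Set V), (k w - 1)! = (k u - 1) * (n - 2)! := by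
    intro u
    rcases (hk1 u).eq_or_lt with hku | hku
    · have hu0 : deleteLeafDegrees k u u = 0 := by rw [deleteLeafDegrees, update_self, ← hku]
      rw [card_treesWithDegrees_eq_zero (hcard ▸ hn2) hu0, ← hku, Nat.sub_self, zero_mul,
        zero_mul]
    have hk1' : ∀ w, 1 ≤ deleteLeafDegrees k u w := fun w => by
      rcases eq_or_ne w u with rfl | hwu
      · rw [deleteLeafDegrees, update_self]
        omega
      · simpa [deleteLeafDegrees, hwu] using hk1 w
    have hsum' : ∑ w, deleteLeafDegrees k u w + 1 = ∑ w : ({v}ᶜ : Set V), k w :=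
      Fintype.sum_update_pred_add_one _ (hk1 u)
    rw [Fintype.prod_factorial_pred_eq_mul_prod_update (fun w : ({v}ᶜ : Set V) => k w) hku,
      mul_left_comm]
    exact congrArg ((k u - 1) * ·) (ih _ hk1' (by omega))
  have hsum_pred : ∑ u : ({v}ᶜ : Set V), (k u - 1) = n - 1 := by
    have h : ∑ u : ({v}ᶜ : Set V), (k u - 1 + 1) = ∑ u : ({v}ᶜ : Set V), k u :=
      sum_congr rfl fun u _ => Nat.sub_add_cancel (hk1 u)
    rw [sum_add_distrib, sum_const, card_univ, hcard, smul_eq_mul, mul_one, hsum] at h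
    omega
  have hprod : ∏ w, (k w - 1)! = ∏ w : ({v}ᶜ : Set V), (k w - 1)! := by
    rw [Fintype.prod_eq_mul_prod_subtype_ne _ v, hv, Nat.sub_self, Nat.factorial_zero, one_mul]
    rfl
  rw [hprod, card_treesWithDegrees_eq_sum hk1 hv, sum_mul, sum_congr rfl fun u _ => hterm u,
    ← sum_mul, hsum_pred, show n - 2 = n - 1 - 1 by omega, Nat.mul_factorial_pred (by omega)]

theorem card_treesWithDegrees_mul_prod_factorial (hV : 2 ≤ Fintype.card V)
    (hk1 : ∀ v, 1 ≤ k v) (hk : ∑ v, k v = 2 * (Fintype.card V - 1)) :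
    Nat.card (treesWithDegrees k) * ∏ v, (k v - 1)! = (Fintype.card V - 2)! := by
  obtain ⟨n, hn⟩ : ∃ n, Fintype.card V = n := ⟨_, rfl⟩
  induction n, (hn ▸ hV : 2 ≤ n) using Nat.le_induction generalizing V with
  | base =>
    have hk_one : k = fun _ => 1 := funext fun v =>
      ((sum_eq_sum_iff_of_le fun i _ => hk1 i).mp (by simp [hk, hn]) v (mem_univ v)).symm
    subst hk_one
    simp [treesWithDegrees_one_eq_singleton_top hn, hn]
  | succ n hn2 ih =>
    obtain ⟨v, hv⟩ := Fintype.exists_eq_one_of_sum_lt hk1 (by omega)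
    have hcard : Fintype.card ({v}ᶜ : Set V) = n := by
      simp [hn, filter_ne']
    rw [hn, Nat.add_sub_cancel] at hk
    rw [hn, show n + 1 - 2 = n - 1 by omega]
    refine card_treesWithDegrees_mul_prod_factorial_of_leaf hn2 hcard hk1 hk hv
      fun k' hk1' hk' => ?_
    rw [← hcard] at hk' ⊢
    exact ih (hcard ▸ hn2) hk1' hk' hcard

end SimpleGraph

/-- Cayley's formula with prescribed degrees: the number of labelled trees on `n ≥ 2`
vertices in which vertex `v` has degree `k v` (with all `k v ≥ 1` and `∑ k v = 2(n-1)`)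
is `(n-2)! / ∏_v (k v - 1)!`. -/
theorem cayley_with_degrees (n : ℕ) (hn : 2 ≤ n) (k : Fin n → ℕ)
    (hk1 : ∀ v, 1 ≤ k v) (hk : ∑ v, k v = 2 * (n - 1)) :
    Nat.card {G : SimpleGraph (Fin n) // G.IsTree ∧ ∀ v, G.degree v = k v} =
      Nat.factorial (n - 2) / ∏ v, Nat.factorial (k v - 1) := by
  have h := SimpleGraph.card_treesWithDegrees_mul_prod_factorial (V := Fin n)
    (by rwa [Fintype.card_fin]) hk1 (by rwa [Fintype.card_fin])
  rw [Fintype.card_fin] at h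
  exact (Nat.div_eq_of_eq_mul_left (prod_pos fun v _ => Nat.factorial_pos _) h.symm).symm
end

section
/- Let Γ : ℝ⁴ × ℝ⁴ → [0,∞) be a bounded measurable function satisfying the Fredholm-type inequality Γ(x,y) ≤ A(e^{-c|x-y|} + ε ∫ e^{-c|x-z|} Γ(z,y) dz) for all x,y, where A, c > 0 and ε ≥ 0. If ε is small enough (specifically ε A ∫ e^{-c|u|} du < 1 and the iteration can be closed with a slightly smaller decay rate c' < c), then there is a constant K such that Γ(x,y) ≤ K A e^{-c'|x-y|} for all x, y. -/
/-!
Freeze `y` and view `g = Γ(·, y)` as a function on a finite-dimensional space. If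
`g ≤ a e^{-c'|· - y|} + b`, inserting this bound into the Fredholm inequality and using
`e^{-c|x-z|} e^{-c'|z-y|} ≤ e^{-(c-c')|x-z|} e^{-c'|x-y|}` gives
`g ≤ A (1 + ε J a) e^{-c'|· - y|} + A ε I b`, where `I`, `J` are the integrals of `e^{-c|u|}` and
`e^{-(c-c')|u|}`. For `A ε J < 1` the coefficient `a = A / (1 - A ε J)` is a fixed point of
`a ↦ A (1 + ε J a)`, so starting from `g ≤ B` one gets `g ≤ a e^{-c'|· - y|} + (A ε I)ⁿ B` for
every `n`, and `A ε I < 1` sends the error term to zero.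
-/

open MeasureTheory Real Filter Topology

theorem le_of_forall_le_add_pow_mul {u v p B : ℝ} (hp0 : 0 ≤ p) (hp1 : p < 1)
    (h : ∀ n : ℕ, u ≤ v + p ^ n * B) : u ≤ v := by
  have hlim : Tendsto (fun n : ℕ ↦ v + p ^ n * B) atTop (𝓝 v) := by
    simpa using
      tendsto_const_nhds.add ((tendsto_pow_atTop_nhds_zero_of_lt_one hp0 hp1).mul_const B)
  exact ge_of_tendsto' hlim h

theorem exp_mul_exp_le_exp_mul_exp {E : Type*} [SeminormedAddCommGroup E] {c c' : ℝ}
    (hc' : 0 ≤ c') (x y z : E) :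
    exp (-c * ‖x - z‖) * exp (-c' * ‖z - y‖) ≤
      exp (-(c - c') * ‖x - z‖) * exp (-c' * ‖x - y‖) := by
  rw [← exp_add, ← exp_add, exp_le_exp]
  nlinarith [norm_sub_le_norm_sub_add_norm_sub x z y]

section ExpKernel

variable {E : Type*} [NormedAddCommGroup E] [NormedSpace ℝ E] [FiniteDimensional ℝ E]
  [MeasurableSpace E] [BorelSpace E] (μ : Measure E) [μ.IsAddHaarMeasure]

theorem integrable_exp_neg_mul_norm {b : ℝ} (hb : 0 < b) :
    Integrable (fun x : E ↦ exp (-b * ‖x‖)) μ := by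
  nontriviality E
  rw [integrable_fun_norm_addHaar μ (f := fun r ↦ exp (-b * r))]
  refine (integrableOn_rpow_mul_exp_neg_mul_rpow (s := (Module.finrank ℝ E - 1 : ℕ)) (p := 1)
    (neg_one_lt_zero.trans_le (Nat.cast_nonneg _)) one_pos hb).congr_fun (fun r _ ↦ ?_)
    measurableSet_Ioi
  simp

theorem integrable_exp_neg_mul_norm_sub {b : ℝ} (hb : 0 < b) (x : E) :
    Integrable (fun z ↦ exp (-b * ‖x - z‖)) μ :=
  (integrable_exp_neg_mul_norm μ hb).comp_sub_left x

theorem integral_exp_neg_mul_norm_sub (b : ℝ) (x : E) :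
    ∫ z, exp (-b * ‖x - z‖) ∂μ = ∫ u, exp (-b * ‖u‖) ∂μ :=
  integral_sub_left_eq_self (fun u ↦ exp (-b * ‖u‖)) μ x

theorem integrable_exp_mul_exp {c c' : ℝ} (hc' : 0 ≤ c') (hcc : c' < c) (x y : E) :
    Integrable (fun z ↦ exp (-c * ‖x - z‖) * exp (-c' * ‖z - y‖)) μ :=
  ((integrable_exp_neg_mul_norm_sub μ (sub_pos.2 hcc) x).mul_const _).mono'
    (by fun_prop) (.of_forall fun z ↦ by
      rw [norm_of_nonneg (by positivity)]
      exact exp_mul_exp_le_exp_mul_exp hc' x y z)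

theorem integral_exp_mul_exp_le {c c' : ℝ} (hc' : 0 ≤ c') (hcc : c' < c) (x y : E) :
    ∫ z, exp (-c * ‖x - z‖) * exp (-c' * ‖z - y‖) ∂μ ≤
      (∫ u, exp (-(c - c') * ‖u‖) ∂μ) * exp (-c' * ‖x - y‖) := by
  rw [← integral_exp_neg_mul_norm_sub μ _ x, ← integral_mul_const]
  exact integral_mono_of_nonneg (.of_forall fun z ↦ by positivity)
    ((integrable_exp_neg_mul_norm_sub μ (sub_pos.2 hcc) x).mul_const _)
    (.of_forall (exp_mul_exp_le_exp_mul_exp hc' x y))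

theorem le_exp_add_of_fredholm_of_le_exp_add {g : E → ℝ} {A c c' ε a b : ℝ} (y : E)
    (hA : 0 ≤ A) (hε : 0 ≤ ε) (hc' : 0 ≤ c') (hcc : c' < c) (ha : 0 ≤ a) (hg0 : ∀ z, 0 ≤ g z)
    (hfred : ∀ x, g x ≤ A * (exp (-c * ‖x - y‖) + ε * ∫ z, exp (-c * ‖x - z‖) * g z ∂μ))
    (hg : ∀ z, g z ≤ a * exp (-c' * ‖z - y‖) + b) (x : E) :
    g x ≤ A * (1 + ε * (∫ u, exp (-(c - c') * ‖u‖) ∂μ) * a) * exp (-c' * ‖x - y‖) +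
      A * ε * (∫ u, exp (-c * ‖u‖) ∂μ) * b := by
  set I := ∫ u, exp (-c * ‖u‖) ∂μ
  set J := ∫ u, exp (-(c - c') * ‖u‖) ∂μ
  have hc : 0 < c := hc'.trans_lt hcc
  have hkg : ∫ z, exp (-c * ‖x - z‖) * g z ∂μ ≤ a * (J * exp (-c' * ‖x - y‖)) + b * I :=
    calc ∫ z, exp (-c * ‖x - z‖) * g z ∂μ
        ≤ ∫ z, a * (exp (-c * ‖x - z‖) * exp (-c' * ‖z - y‖)) + b * exp (-c * ‖x - z‖) ∂μ := by
          refine integral_mono_of_nonneg (.of_forall fun z ↦ mul_nonneg (exp_pos _).le (hg0 z))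
            (((integrable_exp_mul_exp μ hc' hcc x y).const_mul a).add
              ((integrable_exp_neg_mul_norm_sub μ hc x).const_mul b)) (.of_forall fun z ↦ ?_)
          have := mul_le_mul_of_nonneg_left (hg z) (exp_pos (-c * ‖x - z‖)).le
          linarith
      _ = a * ∫ z, exp (-c * ‖x - z‖) * exp (-c' * ‖z - y‖) ∂μ +
            b * ∫ z, exp (-c * ‖x - z‖) ∂μ := by
          rw [integral_add ((integrable_exp_mul_exp μ hc' hcc x y).const_mul a)
            ((integrable_exp_neg_mul_norm_sub μ hc x).const_mul b), integral_const_mul,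
            integral_const_mul]
      _ ≤ a * (J * exp (-c' * ‖x - y‖)) + b * I := by
          rw [integral_exp_neg_mul_norm_sub]
          gcongr
          exact integral_exp_mul_exp_le μ hc' hcc x y
  have hrate : exp (-c * ‖x - y‖) ≤ exp (-c' * ‖x - y‖) :=
    exp_le_exp.2 (by nlinarith [norm_nonneg (x - y)])
  calc g x ≤ A * (exp (-c' * ‖x - y‖) + ε * (a * (J * exp (-c' * ‖x - y‖)) + b * I)) := by
        refine (hfred x).trans ?_
        gcongr
    _ = A * (1 + ε * J * a) * exp (-c' * ‖x - y‖) + A * ε * I * b := by ring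

theorem le_exp_of_fredholm {g : E → ℝ} {A c c' ε B : ℝ} (y : E) (hA : 0 ≤ A) (hε : 0 ≤ ε)
    (hc' : 0 ≤ c') (hcc : c' < c) (hJ : A * ε * ∫ u, exp (-(c - c') * ‖u‖) ∂μ < 1)
    (hI : A * ε * ∫ u, exp (-c * ‖u‖) ∂μ < 1) (hg0 : ∀ z, 0 ≤ g z) (hgB : ∀ z, g z ≤ B)
    (hfred : ∀ x, g x ≤ A * (exp (-c * ‖x - y‖) + ε * ∫ z, exp (-c * ‖x - z‖) * g z ∂μ))
    (x : E) :
    g x ≤ (1 - A * ε * ∫ u, exp (-(c - c') * ‖u‖) ∂μ)⁻¹ * A * exp (-c' * ‖x - y‖) := by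
  set I := ∫ u, exp (-c * ‖u‖) ∂μ
  set J := ∫ u, exp (-(c - c') * ‖u‖) ∂μ
  set K := (1 - A * ε * J)⁻¹ * A
  have hK : 0 ≤ K := mul_nonneg (inv_nonneg.2 (sub_pos.2 hJ).le) hA
  have hfix : A * (1 + ε * J * K) = K := by
    simp only [K]
    field_simp [(sub_pos.2 hJ).ne']
    ring
  have hI0 : 0 ≤ A * ε * I :=
    mul_nonneg (mul_nonneg hA hε) (integral_nonneg fun u ↦ (exp_pos _).le)
  have hiter : ∀ n : ℕ, ∀ z, g z ≤ K * exp (-c' * ‖z - y‖) + (A * ε * I) ^ n * B := by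
    intro n
    induction n with
    | zero => exact fun z ↦ by nlinarith [hgB z, exp_pos (-c' * ‖z - y‖)]
    | succ n ih =>
      intro z
      have := le_exp_add_of_fredholm_of_le_exp_add μ y hA hε hc' hcc hK hg0 hfred ih z
      rwa [hfix, ← mul_assoc, ← pow_succ'] at this
  exact le_of_forall_le_add_pow_mul hI0 hI fun n ↦ hiter n x

end ExpKernel

/-- Exponential decay from a Fredholm-type integral inequality: if a bounded measurable
nonnegative kernel `Γ` on `ℝ⁴ × ℝ⁴` satisfies
`Γ(x,y) ≤ A (e^{-c|x-y|} + ε ∫ e^{-c|x-z|} Γ(z,y) dz)` and `ε` is small enough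
(depending on `A`, `c` and a rate `0 < c' < c`), then `Γ(x,y) ≤ K A e^{-c'|x-y|}`. -/
theorem fredholm_inequality_decay
    (A c c' : ℝ) (hA : 0 < A) (hc' : 0 < c') (hcc : c' < c) :
    ∃ ε₀ : ℝ, 0 < ε₀ ∧
      ∀ (Γ : EuclideanSpace ℝ (Fin 4) → EuclideanSpace ℝ (Fin 4) → ℝ)
        (_ : Measurable (Function.uncurry Γ))
        (_ : ∀ x y, 0 ≤ Γ x y) (B : ℝ) (_ : ∀ x y, Γ x y ≤ B)
        (ε : ℝ) (_ : 0 ≤ ε) (_ : ε < ε₀),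
        (∀ x y, Γ x y ≤
            A * (Real.exp (-c * ‖x - y‖) +
              ε * ∫ z, Real.exp (-c * ‖x - z‖) * Γ z y)) →
        ∃ K : ℝ, ∀ x y, Γ x y ≤ K * A * Real.exp (-c' * ‖x - y‖) := by
  set I := ∫ u : EuclideanSpace ℝ (Fin 4), exp (-c * ‖u‖)
  set J := ∫ u : EuclideanSpace ℝ (Fin 4), exp (-(c - c') * ‖u‖)
  have hI : 0 ≤ I := integral_nonneg fun u ↦ (exp_pos _).le
  have hJ : 0 ≤ J := integral_nonneg fun u ↦ (exp_pos _).le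
  refine ⟨1 / (A * (I + J) + 1), by positivity,
    fun Γ _ hΓ0 B hB ε hε hεlt hfred ↦ ⟨(1 - A * ε * J)⁻¹, fun x y ↦ ?_⟩⟩
  have hsmall : ε * (A * (I + J) + 1) < 1 := (lt_div_iff₀ (by positivity)).1 hεlt
  have hAεI : 0 ≤ A * ε * I := by positivity
  have hAεJ : 0 ≤ A * ε * J := by positivity
  exact le_exp_of_fredholm volume y hA.le hε hc'.le hcc (by nlinarith) (by nlinarith)
    (hΓ0 · y) (hB · y) (hfred · y) x
end

section
/- Let T be a tree on vertex set {1,...,n} and for each edge ℓ of T let w_ℓ ∈ [0,1]. Define the n×n matrix W by W(v,v) = 1 and, for v ≠ v', W(v,v') = min over edges ℓ on the unique path in T from v to v' of w_ℓ. Then W is a positive semidefinite matrix. -/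
/-!
Layer-cake decomposition: for `t ∈ [0,1]` let `A t` be the matrix with entry `1` when `v` and
`v'` are joined by edges of weight `≥ t`, and `0` otherwise. In a tree this happens exactly when
`t` is at most the minimum weight along the path from `v` to `v'`, so `W = ∫₀¹ A t dt`. Each
`A t` is the indicator matrix of the connected components of a graph, i.e. `Bᴴ B` for the
component-incidence matrix `B`, hence positive semidefinite, and so is their integral.
-/

open MeasureTheory Set Matrix SimpleGraph

theorem List.le_foldr_min_iff {α : Type*} [LinearOrder α] {t b : α} {l : List α} :
    t ≤ l.foldr min b ↔ t ≤ b ∧ ∀ a ∈ l, t ≤ a := by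
  induction l with
  | nil => simp
  | cons a l ih => simp [ih, and_left_comm]

theorem Matrix.posSemidef_ite_apply_eq_apply {ι κ : Type*} [Fintype ι] [Finite κ] [DecidableEq κ]
    (f : ι → κ) : (of fun i j => if f i = f j then (1 : ℝ) else 0).PosSemidef := by
  have := Fintype.ofFinite κ
  convert posSemidef_conjTranspose_mul_self (of fun (k : κ) i => if f i = k then (1 : ℝ) else 0)
  ext i j
  simp [mul_apply, eq_comm]

theorem SimpleGraph.posSemidef_reachable {V : Type*} [Fintype V] (G : SimpleGraph V)
    [DecidableRel G.Reachable] :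
    (of fun u v => if G.Reachable u v then (1 : ℝ) else 0).PosSemidef := by
  classical
  simpa only [ConnectedComponent.eq] using
    posSemidef_ite_apply_eq_apply G.connectedComponentMk

theorem Matrix.posSemidef_entrywise_integral {α ι : Type*} [MeasurableSpace α] {μ : Measure α}
    [Fintype ι] {A : α → Matrix ι ι ℝ} (hA : ∀ i j, Integrable (fun a => A a i j) μ)
    (hpsd : ∀ᵐ a ∂μ, (A a).PosSemidef) :
    (of fun i j => ∫ a, A a i j ∂μ).PosSemidef := by
  refine .of_dotProduct_mulVec_nonneg ?_ fun x => ?_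
  · ext i j
    refine integral_congr_ae (hpsd.mono fun a ha => ?_)
    simpa using ha.isHermitian.apply i j
  · have hquad : star x ⬝ᵥ (of fun i j => ∫ a, A a i j ∂μ) *ᵥ x
        = ∫ a, star x ⬝ᵥ A a *ᵥ x ∂μ := by
      simp only [dotProduct, mulVec, of_apply, star_trivial, Finset.mul_sum]
      rw [integral_finsetSum _ fun i _ => integrable_finsetSum _ fun j _ =>
        ((hA i j).mul_const _).const_mul _]
      refine Finset.sum_congr rfl fun i _ => ?_
      rw [integral_finsetSum _ fun j _ => ((hA i j).mul_const _).const_mul _]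
      simp only [integral_const_mul, integral_mul_const]
    rw [hquad]
    exact integral_nonneg_of_ae (hpsd.mono fun a ha => ha.dotProduct_mulVec_nonneg x)

theorem integral_Icc_zero_one_ite_le {m : ℝ} (hm : m ∈ Icc (0 : ℝ) 1) :
    ∫ t in Icc (0 : ℝ) 1, (if t ≤ m then (1 : ℝ) else 0) = m := by
  have hind : (fun t : ℝ => if t ≤ m then (1 : ℝ) else 0) = (Iic m).indicator 1 := by
    ext t; simp [indicator_apply]
  have hcut : Iic m ∩ Icc 0 1 = Icc 0 m := by
    ext t
    simp only [mem_inter_iff, mem_Iic, mem_Icc]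
    exact ⟨fun h => ⟨h.2.1, h.1⟩, fun h => ⟨h.2, h.1, h.2.trans hm.2⟩⟩
  rw [hind, integral_indicator_one measurableSet_Iic, measureReal_restrict_apply measurableSet_Iic,
    hcut, Real.volume_real_Icc_of_le hm.1, sub_zero]

namespace SimpleGraph

variable {V : Type*} (G : SimpleGraph V) (w : Sym2 V → ℝ)

def levelGraph (t : ℝ) : SimpleGraph V := G.deleteEdges {e | w e < t}

theorem levelGraph_antitone : Antitone (G.levelGraph w) :=
  fun _ _ hst => deleteEdges_anti fun _ he => lt_of_lt_of_le he hst

variable {G w}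

theorem IsAcyclic.reachable_levelGraph_iff (hG : G.IsAcyclic) {t : ℝ} {u v : V}
    {p : G.Walk u v} (hp : p.IsPath) :
    (G.levelGraph w t).Reachable u v ↔ ∀ e ∈ p.edges, t ≤ w e := by
  classical
  constructor
  · rintro ⟨q⟩
    obtain ⟨q, hq⟩ := q.toPath
    have hle : G.levelGraph w t ≤ G := deleteEdges_le _
    have hpq : p = q.mapLe hle :=
      congrArg Subtype.val ((hG.subsingleton_path u v).elim ⟨p, hp⟩ ⟨_, hq.mapLe _⟩)
    intro e he
    rw [hpq, Walk.edges_mapLe_eq_edges] at he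
    have := q.edges_subset_edgeSet he
    rw [levelGraph, edgeSet_deleteEdges] at this
    exact not_lt.1 this.2
  · intro h
    refine (p.transfer _ fun e he => ?_).reachable
    rw [levelGraph, edgeSet_deleteEdges]
    exact ⟨p.edges_subset_edgeSet he, not_lt.2 (h e he)⟩

theorem antitone_ite_reachable_levelGraph (u v : V)
    [∀ t, Decidable ((G.levelGraph w t).Reachable u v)] :
    Antitone fun t => if (G.levelGraph w t).Reachable u v then (1 : ℝ) else 0 := by
  intro s t hst
  dsimp only
  by_cases h : (G.levelGraph w t).Reachable u v
  · rw [if_pos h, if_pos (h.mono (levelGraph_antitone G w hst))]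
  · rw [if_neg h]
    split_ifs <;> norm_num

theorem IsAcyclic.integral_ite_reachable_levelGraph (hG : G.IsAcyclic)
    (hw : ∀ e, w e ∈ Icc (0 : ℝ) 1) {u v : V} [∀ t, Decidable ((G.levelGraph w t).Reachable u v)]
    {p : G.Walk u v} (hp : p.IsPath) :
    ∫ t in Icc (0 : ℝ) 1, (if (G.levelGraph w t).Reachable u v then (1 : ℝ) else 0)
      = (p.edges.map w).foldr min 1 := by
  have hreach : ∀ t ∈ Icc (0 : ℝ) 1,
      (G.levelGraph w t).Reachable u v ↔ t ≤ (p.edges.map w).foldr min 1 := fun t ht => by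
    simp [hG.reachable_levelGraph_iff hp, List.le_foldr_min_iff, ht.2]
  rw [setIntegral_congr_fun measurableSet_Icc fun t ht => if_congr (hreach t ht) rfl rfl]
  refine integral_Icc_zero_one_ite_le ⟨?_, ?_⟩
  · simpa [List.le_foldr_min_iff] using fun e _ => (hw e).1
  · exact (List.le_foldr_min_iff.1 le_rfl).1

end SimpleGraph

/-- Positivity of the forest-formula covariance: let `T` be a tree on `n` vertices with
interpolation parameters `w_ℓ ∈ [0,1]` on its edges, and let `W` be the matrix with
`W v v = 1` and, for `v ≠ v'`, `W v v'` the minimum of the `w_ℓ` over the edges `ℓ`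
of the unique path in `T` from `v` to `v'`. Then `W` is positive semidefinite. -/
theorem forest_formula_covariance_posSemidef
    (n : ℕ) (T : SimpleGraph (Fin n)) (hT : T.IsTree)
    (w : Sym2 (Fin n) → ℝ) (hw : ∀ e, w e ∈ Set.Icc (0 : ℝ) 1)
    (W : Matrix (Fin n) (Fin n) ℝ)
    (hWdiag : ∀ v, W v v = 1)
    (hWoff : ∀ v v', v ≠ v' → ∀ p : T.Walk v v', p.IsPath →
      W v v' = (p.edges.map w).foldr min 1) :
    W.PosSemidef := by
  classical
  have hW : W = of fun v v' =>
      ∫ t in Icc (0 : ℝ) 1, (if (T.levelGraph w t).Reachable v v' then (1 : ℝ) else 0) := by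
    ext v v'
    obtain ⟨p, hp⟩ := (hT.connected.preconnected v v').some.toPath
    rw [of_apply, hT.isAcyclic.integral_ite_reachable_levelGraph hw hp]
    rcases eq_or_ne v v' with rfl | hne
    · simp [hWdiag, (Walk.isPath_iff_nil.1 hp).eq_nil]
    · exact hWoff v v' hne p hp
  rw [hW]
  refine posSemidef_entrywise_integral (fun v v' => ?_)
    (ae_of_all _ fun t => (T.levelGraph w t).posSemidef_reachable)
  exact ((antitone_ite_reachable_levelGraph v v').antitoneOn _).integrableOn_isCompact isCompact_Icc
end
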